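/- Let u₁, u₂, u₃, u₄, u₅ : ℝ → ℝ be differentiable functions satisfying for all t ∈ ℝ: u₁′ = −u₃u₅, u₂′ = u₃u₄, u₃′ = u₁u₅ − u₂u₄, u₄′ = u₂u₃, u₅′ = −u₁u₃. Let U(t) = ∫₀ᵗ u₃(τ) dτ, A = (u₁(0)+u₅(0))² + (u₂(0)−u₄(0))², and B = (u₁(0)−u₅(0))² + (u₂(0)+u₄(0))². Then U is twice differentiable and satisfies for all t ∈ ℝ the second-order autonomous ODE U″(t) = (A/4)·exp(−2U(t)) − (B/4)·exp(2U(t)), with U(0) = 0 and U′(0) = u₃(0). -/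

import Mathlib

/-!
Along an extremal, `u₁ ± u₅` and `u₂ ∓ u₄` satisfy the scalar linear equations `x' = ∓u₃ x`,
so they equal their initial values times `exp (∓U)`. Since
`4 (u₁u₅ - u₂u₄) = (u₁ + u₅)² + (u₂ - u₄)² - (u₁ - u₅)² - (u₂ + u₄)²`, the equation
`U'' = u₃' = u₁u₅ - u₂u₄` becomes `U'' = (A/4) e^{-2U} - (B/4) e^{2U}`.
-/

open Real

theorem eq_mul_exp_sub_of_hasDerivAt {f g k : ℝ → ℝ} (hf : ∀ t, HasDerivAt f (k t * f t) t)
    (hg : ∀ t, HasDerivAt g (k t) t) (s t : ℝ) : f t = f s * exp (g t - g s) := by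
  have hderiv : ∀ t, HasDerivAt (fun t => f t * exp (-g t)) 0 t := fun t =>
    ((hf t).mul ((hg t).neg.exp)).congr_deriv (by ring)
  have hconst : f t * exp (-g t) = f s * exp (-g s) :=
    is_const_of_deriv_eq_zero (fun x => (hderiv x).differentiableAt) (fun x => (hderiv x).deriv) t s
  calc f t = f t * exp (-g t) * exp (g t) := by rw [mul_assoc, ← exp_add]; simp
    _ = f s * exp (g t - g s) := by rw [hconst, mul_assoc, ← exp_add]; ring_nf

section Extremal

variable {u₁ u₂ u₃ u₄ u₅ U : ℝ → ℝ}
  (h₁ : ∀ t, HasDerivAt u₁ (-(u₃ t * u₅ t)) t)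
  (h₂ : ∀ t, HasDerivAt u₂ (u₃ t * u₄ t) t)
  (h₄ : ∀ t, HasDerivAt u₄ (u₂ t * u₃ t) t)
  (h₅ : ∀ t, HasDerivAt u₅ (-(u₁ t * u₃ t)) t)
  (hU : ∀ t, HasDerivAt U (u₃ t) t)
include h₁ h₂ h₄ h₅ hU

theorem mul_sub_mul_eq_exp (hU0 : U 0 = 0) (t : ℝ) :
    u₁ t * u₅ t - u₂ t * u₄ t =
      ((u₁ 0 + u₅ 0) ^ 2 + (u₂ 0 - u₄ 0) ^ 2) / 4 * exp (-(2 * U t)) -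
        ((u₁ 0 - u₅ 0) ^ 2 + (u₂ 0 + u₄ 0) ^ 2) / 4 * exp (2 * U t) := by
  have hnegU : ∀ t, HasDerivAt (fun t => -U t) (-u₃ t) t := fun t => (hU t).neg
  have hp₁ := eq_mul_exp_sub_of_hasDerivAt (fun t => ((h₁ t).add (h₅ t)).congr_deriv
    (by ring : _ = -u₃ t * (u₁ t + u₅ t))) hnegU 0 t
  have hp₂ := eq_mul_exp_sub_of_hasDerivAt (fun t => ((h₂ t).sub (h₄ t)).congr_deriv
    (by ring : _ = -u₃ t * (u₂ t - u₄ t))) hnegU 0 t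
  have hq₁ := eq_mul_exp_sub_of_hasDerivAt (fun t => ((h₁ t).sub (h₅ t)).congr_deriv
    (by ring : _ = u₃ t * (u₁ t - u₅ t))) hU 0 t
  have hq₂ := eq_mul_exp_sub_of_hasDerivAt (fun t => ((h₂ t).add (h₄ t)).congr_deriv
    (by ring : _ = u₃ t * (u₂ t + u₄ t))) hU 0 t
  simp only [Pi.add_apply, Pi.sub_apply, hU0, neg_zero, sub_zero] at hp₁ hp₂ hq₁ hq₂
  have hexp_neg : exp (-(2 * U t)) = exp (-U t) ^ 2 := by rw [sq, ← exp_add]; ring_nf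
  have hexp : exp (2 * U t) = exp (U t) ^ 2 := by rw [sq, ← exp_add]; ring_nf
  rw [hexp_neg, hexp]
  -- each square is matched through `x² - y² = (x + y) (x - y)`
  linear_combination ((u₁ t + u₅ t + (u₁ 0 + u₅ 0) * exp (-U t)) * hp₁
    + (u₂ t - u₄ t + (u₂ 0 - u₄ 0) * exp (-U t)) * hp₂
    - (u₁ t - u₅ t + (u₁ 0 - u₅ 0) * exp (U t)) * hq₁
    - (u₂ t + u₄ t + (u₂ 0 + u₄ 0) * exp (U t)) * hq₂) / 4

end Extremal

/-- The integral `U(t) = ∫₀ᵗ u₃` of the extremal control `u₃` satisfies the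
second-order autonomous ODE `U'' = (A/4)e^{-2U} - (B/4)e^{2U}` with `U(0) = 0`,
`U'(0) = u₃(0)`. -/
theorem stmt_4 (u₁ u₂ u₃ u₄ u₅ : ℝ → ℝ)
    (h₁ : ∀ t, HasDerivAt u₁ (-(u₃ t * u₅ t)) t)
    (h₂ : ∀ t, HasDerivAt u₂ (u₃ t * u₄ t) t)
    (h₃ : ∀ t, HasDerivAt u₃ (u₁ t * u₅ t - u₂ t * u₄ t) t)
    (h₄ : ∀ t, HasDerivAt u₄ (u₂ t * u₃ t) t)
    (h₅ : ∀ t, HasDerivAt u₅ (-(u₁ t * u₃ t)) t)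
    (U : ℝ → ℝ) (hU : ∀ t, U t = ∫ τ in (0:ℝ)..t, u₃ τ)
    (A B : ℝ)
    (hA : A = (u₁ 0 + u₅ 0) ^ 2 + (u₂ 0 - u₄ 0) ^ 2)
    (hB : B = (u₁ 0 - u₅ 0) ^ 2 + (u₂ 0 + u₄ 0) ^ 2) :
    (∀ t, HasDerivAt U (u₃ t) t) ∧
    (∀ t, HasDerivAt (deriv U)
      (A / 4 * Real.exp (-(2 * U t)) - B / 4 * Real.exp (2 * U t)) t) ∧
    U 0 = 0 ∧ deriv U 0 = u₃ 0 := by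
  have hcont : Continuous u₃ := continuous_iff_continuousAt.mpr fun t => (h₃ t).continuousAt
  have hdU : ∀ t, HasDerivAt U (u₃ t) t := by
    rw [show U = fun t => ∫ τ in (0:ℝ)..t, u₃ τ from funext hU]
    exact fun t => (hcont.integral_hasStrictDerivAt 0 t).hasDerivAt
  have hU0 : U 0 = 0 := by simp [hU]
  have hderivU : deriv U = u₃ := funext fun t => (hdU t).deriv
  refine ⟨hdU, fun t => ?_, hU0, by rw [hderivU]⟩
  rw [hderivU, hA, hB, ← mul_sub_mul_eq_exp h₁ h₂ h₄ h₅ hdU hU0]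
  exact h₃ t
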